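/- arXiv:0812.3072 — 6 statements merged into one kernel-verified Lean document; each statement's English description precedes it below -/
import Mathlib

section
/- Any ortholattice in which the 3OA law holds for all elements is orthomodular, i.e., if for all a₁, a₂, a₃ one has (a₁→a₃) ⊓ (a₁ ≡₃ a₂) ≤ (a₂→a₃), then for all a, b, a ≤ b implies a ⊔ (a' ⊓ b) = b. -/
/-- An ortholattice: a bounded lattice with an orthocomplementation. -/
class Ortholattice (α : Type*) extends Lattice α, BoundedOrder α, Compl α where
  compl_compl : ∀ a : α, aᶜᶜ = a
  compl_le_compl : ∀ a b : α, a ≤ b → bᶜ ≤ aᶜ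
  inf_compl_self : ∀ a : α, a ⊓ aᶜ = ⊥
  sup_compl_self : ∀ a : α, a ⊔ aᶜ = ⊤

/-- The Sasaki hook `a → b := a' ⊔ (a ⊓ b)`. -/
def sasaki {α : Type*} [Ortholattice α] (a b : α) : α := aᶜ ⊔ (a ⊓ b)

/-!
Specialising the 3OA law to `a₁ = y`, `a₂ = ⊤`, `a₃ = x` with `x ≤ y` collapses every Sasaki hook
to a lattice polynomial: `y → x = y' ⊔ x`, `⊤ → x = x`, `y' → x = y` and `⊥ → x = ⊤`. The law then
reads `(y' ⊔ x) ⊓ ((y' ⊔ x) ⊓ x ⊔ y) ≤ x`, whence `y ⊓ (y' ⊔ x) ≤ x`. This is the orthomodular law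
in dual form, and orthocomplementation turns it into the usual one.
-/

namespace Ortholattice

variable {α : Type*} [Ortholattice α]

theorem compl_le_compl_iff {a b : α} : aᶜ ≤ bᶜ ↔ b ≤ a :=
  ⟨fun h => by simpa only [compl_compl] using compl_le_compl _ _ h, compl_le_compl _ _⟩

theorem le_compl_iff_le_compl {a b : α} : a ≤ bᶜ ↔ b ≤ aᶜ := by
  rw [← compl_le_compl_iff, compl_compl]

theorem compl_top : (⊤ : α)ᶜ = ⊥ := by
  simpa only [top_inf_eq] using inf_compl_self (⊤ : α)

theorem compl_bot : (⊥ : α)ᶜ = ⊤ := by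
  rw [← compl_top, compl_compl]

theorem compl_sup (a b : α) : (a ⊔ b)ᶜ = aᶜ ⊓ bᶜ :=
  le_antisymm (le_inf (compl_le_compl _ _ le_sup_left) (compl_le_compl _ _ le_sup_right)) <| by
    rw [le_compl_iff_le_compl]
    exact sup_le (le_compl_iff_le_compl.mp inf_le_left) (le_compl_iff_le_compl.mp inf_le_right)

theorem compl_inf (a b : α) : (a ⊓ b)ᶜ = aᶜ ⊔ bᶜ := by
  rw [← compl_compl (aᶜ ⊔ bᶜ), compl_sup, compl_compl, compl_compl]

theorem compl_inf_eq_bot_of_le {a b : α} (h : a ≤ b) : bᶜ ⊓ a = ⊥ :=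
  le_bot_iff.mp <| (inf_le_inf_left _ h).trans (by rw [inf_comm, inf_compl_self])


theorem sasaki_of_le {a b : α} (h : b ≤ a) : sasaki a b = aᶜ ⊔ b := by
  rw [sasaki, inf_eq_right.mpr h]

theorem sasaki_compl_of_le {a b : α} (h : b ≤ a) : sasaki aᶜ b = a := by
  rw [sasaki, compl_compl, compl_inf_eq_bot_of_le h, sup_bot_eq]

theorem top_sasaki (b : α) : sasaki ⊤ b = b := by
  rw [sasaki, compl_top, top_inf_eq, bot_sup_eq]

theorem bot_sasaki (b : α) : sasaki ⊥ b = ⊤ := by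
  rw [sasaki, compl_bot, top_sup_eq]

def Satisfies3OA (α : Type*) [Ortholattice α] : Prop :=
  ∀ a₁ a₂ a₃ : α,
    sasaki a₁ a₃ ⊓ ((sasaki a₁ a₃ ⊓ sasaki a₂ a₃) ⊔ (sasaki a₁ᶜ a₃ ⊓ sasaki a₂ᶜ a₃)) ≤ sasaki a₂ a₃

theorem inf_compl_sup_le_of_3OA (h3OA : Satisfies3OA α) {x y : α} (hxy : x ≤ y) :
    y ⊓ (yᶜ ⊔ x) ≤ x := by
  have h := h3OA y ⊤ x
  rw [sasaki_of_le hxy, top_sasaki, sasaki_compl_of_le hxy, compl_top, bot_sasaki,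
    inf_top_eq] at h
  calc y ⊓ (yᶜ ⊔ x) = (yᶜ ⊔ x) ⊓ y := inf_comm _ _
    _ ≤ (yᶜ ⊔ x) ⊓ ((yᶜ ⊔ x) ⊓ x ⊔ y) := inf_le_inf_left _ le_sup_right
    _ ≤ x := h

theorem sup_compl_inf_eq_of_3OA (h3OA : Satisfies3OA α) {a b : α} (hab : a ≤ b) :
    a ⊔ (aᶜ ⊓ b) = b := by
  refine le_antisymm (sup_le hab inf_le_right) ?_
  have hdual : aᶜ ⊓ (a ⊔ bᶜ) ≤ bᶜ := by
    simpa only [compl_compl] using inf_compl_sup_le_of_3OA h3OA (compl_le_compl_iff.mpr hab)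
  simpa only [compl_inf, compl_sup, compl_compl] using compl_le_compl _ _ hdual

end Ortholattice

/-- If the 3OA law holds in an ortholattice, the lattice is orthomodular. -/
theorem stmt_1 {α : Type*} [Ortholattice α]
    (h3OA : ∀ a₁ a₂ a₃ : α,
      sasaki a₁ a₃ ⊓ ((sasaki a₁ a₃ ⊓ sasaki a₂ a₃) ⊔ (sasaki a₁ᶜ a₃ ⊓ sasaki a₂ᶜ a₃)) ≤
        sasaki a₂ a₃) :
    ∀ a b : α, a ≤ b → a ⊔ (aᶜ ⊓ b) = b :=
  fun _ _ => Ortholattice.sup_compl_inf_eq_of_3OA h3OA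
end

section
/- For every n ≥ 4: in any ortholattice, if the nOA law holds for all elements, then the (n−1)OA law holds for all elements. -/
/-- The generalized orthoarguesian equivalence `a ≡ₙ b` where `n = k + 3`:
`a3` is the third variable and `p` lists the parameters `a₄, …, aₙ`.
For `k = 0` it is `((a→a₃)⊓(b→a₃)) ⊔ ((a'→a₃)⊓(b'→a₃))`, and
`a ≡ₖ₊₁ b = (a ≡ₖ b) ⊔ ((a ≡ₖ aₖ₊₁) ⊓ (b ≡ₖ aₖ₊₁))`. -/
def oaeq {α : Type*} [Ortholattice α] (a3 : α) :
    (k : ℕ) → (Fin k → α) → α → α → α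
  | 0, _, a, b => (sasaki a a3 ⊓ sasaki b a3) ⊔ (sasaki aᶜ a3 ⊓ sasaki bᶜ a3)
  | k + 1, p, a, b =>
      oaeq a3 k (fun i => p i.castSucc) a b ⊔
        (oaeq a3 k (fun i => p i.castSucc) a (p (Fin.last k)) ⊓
          oaeq a3 k (fun i => p i.castSucc) b (p (Fin.last k)))

/-- The nOA law in an ortholattice `α`:
`(a₁→a₃) ⊓ (a₁ ≡ₙ a₂) ≤ a₂→a₃` for all `a₁, …, aₙ`. -/
def OAlawN (α : Type*) [Ortholattice α] (n : ℕ) : Prop :=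
  ∀ (hn : 3 ≤ n) (a : Fin n → α),
    sasaki (a ⟨0, by omega⟩) (a ⟨2, by omega⟩) ⊓
      oaeq (a ⟨2, by omega⟩) (n - 3) (fun j => a ⟨j.1 + 3, by have := j.2; omega⟩)
        (a ⟨0, by omega⟩) (a ⟨1, by omega⟩) ≤
    sasaki (a ⟨1, by omega⟩) (a ⟨2, by omega⟩)

section

variable {α : Type*} [Ortholattice α]

theorem oaeq_init_le (a3 : α) {k : ℕ} (p : Fin (k + 1) → α) (a b : α) :
    oaeq a3 k (Fin.init p) a b ≤ oaeq a3 (k + 1) p a b :=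
  le_sup_left

theorem OAlawN.of_succ {n : ℕ} (h : OAlawN α (n + 1)) : OAlawN α n := by
  intro hn a
  obtain ⟨m, rfl⟩ := Nat.exists_eq_add_of_le' hn
  set b : Fin (m + 4) → α := Fin.snoc a ⊥
  have hb : ∀ i (hi : i < m + 3), b ⟨i, by omega⟩ = a ⟨i, hi⟩ := fun i hi =>
    Fin.snoc_castSucc (i := ⟨i, hi⟩) ..
  have hlaw := h (by omega) b
  rw [hb 0 (by omega), hb 1 (by omega), hb 2 (by omega)] at hlaw
  refine le_trans (inf_le_inf_left _ ?_) hlaw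
  have hinit : Fin.init (fun j : Fin (m + 1) => b ⟨j + 3, by omega⟩) =
      fun j : Fin m => a ⟨j + 3, by omega⟩ :=
    funext fun j => hb _ _
  exact hinit ▸ oaeq_init_le _ _ _ _

end

/-- For every `n ≥ 4`, in any ortholattice the nOA law implies the (n-1)OA law. -/
theorem stmt_3 {α : Type*} [Ortholattice α] :
    ∀ n : ℕ, 4 ≤ n → OAlawN α n → OAlawN α (n - 1) := by
  intro n hn
  obtain ⟨m, rfl⟩ : ∃ m, n = m + 1 := ⟨n - 1, by omega⟩
  exact OAlawN.of_succ
end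

section
/- Let H be a complex Hilbert space and let a, b be closed subspaces of H with a not contained in b. Then there exists a unit vector u ∈ a with u ∉ b such that the function m : C(H) → ℝ defined by m(c) = ‖P_c u‖², where P_c is the orthogonal projection onto the closed subspace c, is a state on the ortholattice C(H) satisfying m(a) = 1 and m(b) < 1. Consequently, C(H) admits a strong set of states. -/
/-- A closed subspace of a complex Hilbert space `H`: an element of `C(H)`. -/
def ClosedSubspace (H : Type*) [NormedAddCommGroup H] [InnerProductSpace ℂ H] : Type _ :=
  {K : Submodule ℂ H // IsClosed (K : Set H)}

namespace ClosedSubspace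

variable {H : Type*} [NormedAddCommGroup H] [InnerProductSpace ℂ H]

/-- The greatest element of `C(H)`: the whole space. -/
def top : ClosedSubspace H := ⟨⊤, by rw [Submodule.top_coe]; exact isClosed_univ⟩

/-- The join in `C(H)`: the topological closure of the subspace sum. -/
def sup (a b : ClosedSubspace H) : ClosedSubspace H :=
  ⟨(a.1 ⊔ b.1).topologicalClosure, Submodule.isClosed_topologicalClosure _⟩

/-- The orthocomplement in `C(H)`. -/
noncomputable def compl (a : ClosedSubspace H) : ClosedSubspace H :=
  ⟨a.1ᗮ, Submodule.isClosed_orthogonal _⟩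

/-- The partial order of `C(H)`: inclusion. -/
def le (a b : ClosedSubspace H) : Prop := a.1 ≤ b.1

/-- A state (probability measure) on the ortholattice `C(H)`. -/
def IsState (m : ClosedSubspace H → ℝ) : Prop :=
  (∀ a : ClosedSubspace H, 0 ≤ m a ∧ m a ≤ 1) ∧ m top = 1 ∧
    ∀ a b : ClosedSubspace H, le a (compl b) → m (sup a b) = m a + m b

variable [CompleteSpace H]

/-- The map `c ↦ ‖P_c u‖²`, where `P_c` is the orthogonal projection onto the
closed subspace `c`. -/
noncomputable def projSq (u : H) (c : ClosedSubspace H) : ℝ :=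
  haveI : CompleteSpace c.1 := c.2.completeSpace_coe
  ‖(c.1.orthogonalProjection u : H)‖ ^ 2

end ClosedSubspace

/-! For a unit vector `u`, the projections of `u` onto two orthogonal closed subspaces add up to
its projection onto their closed sum, so by Pythagoras `c ↦ ‖P_c u‖²` is additive on orthogonal
pairs, i.e. a state. Since `‖P_b u‖ = ‖u‖` exactly when `u ∈ b`, a unit vector of `a` outside `b`
gives a state with `m a = 1 > m b`; these states separate any `c ≰ d`. -/

namespace Submodule

variable {𝕜 E : Type*} [RCLike 𝕜] [NormedAddCommGroup E] [InnerProductSpace 𝕜 E]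

theorem exists_norm_eq_one_mem_notMem_of_not_le {p q : Submodule 𝕜 E} (h : ¬ p ≤ q) :
    ∃ u : E, ‖u‖ = 1 ∧ u ∈ p ∧ u ∉ q := by
  obtain ⟨x, hxp, hxq⟩ := SetLike.not_le_iff_exists.1 h
  have hx : x ≠ 0 := fun hx ↦ hxq (hx ▸ q.zero_mem)
  have hc : (‖x‖⁻¹ : 𝕜) ≠ 0 := by simpa using hx
  exact ⟨(‖x‖⁻¹ : 𝕜) • x, norm_smul_inv_norm hx, p.smul_mem _ hxp,
    (q.smul_mem_iff hc).not.2 hxq⟩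

theorem starProjection_topologicalClosure_sup_of_isOrtho {K L : Submodule 𝕜 E}
    [K.HasOrthogonalProjection] [L.HasOrthogonalProjection]
    [(K ⊔ L).topologicalClosure.HasOrthogonalProjection] (h : K ⟂ L) (u : E) :
    (K ⊔ L).topologicalClosure.starProjection u = K.starProjection u + L.starProjection u := by
  refine eq_starProjection_of_mem_orthogonal ((K ⊔ L).le_topologicalClosure
    (add_mem_sup (K.starProjection_apply_mem u) (L.starProjection_apply_mem u))) ?_
  rw [orthogonal_closure, ← inf_orthogonal]
  constructor
  · simpa [sub_add_eq_sub_sub] using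
      sub_mem (K.sub_starProjection_mem_orthogonal u) (h.symm.le (L.starProjection_apply_mem u))
  · simpa [sub_add_eq_sub_sub_swap] using
      sub_mem (L.sub_starProjection_mem_orthogonal u) (h.le (K.starProjection_apply_mem u))

end Submodule

namespace ClosedSubspace

variable {H : Type*} [NormedAddCommGroup H] [InnerProductSpace ℂ H] [CompleteSpace H]

instance (c : ClosedSubspace H) : CompleteSpace c.1 := c.2.completeSpace_coe

theorem projSq_eq (u : H) (c : ClosedSubspace H) : projSq u c = ‖c.1.starProjection u‖ ^ 2 := rfl

theorem projSq_le (u : H) (c : ClosedSubspace H) : projSq u c ≤ ‖u‖ ^ 2 := by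
  rw [projSq_eq]
  gcongr
  exact c.1.norm_starProjection_apply_le u

theorem projSq_eq_norm_sq_iff {u : H} {c : ClosedSubspace H} : projSq u c = ‖u‖ ^ 2 ↔ u ∈ c.1 := by
  rw [projSq_eq, sq_eq_sq₀ (norm_nonneg _) (norm_nonneg _), c.1.mem_iff_norm_starProjection]

theorem projSq_top (u : H) : projSq u top = ‖u‖ ^ 2 :=
  projSq_eq_norm_sq_iff.2 (Submodule.mem_top (R := ℂ))

theorem projSq_sup_of_le_compl (u : H) {c d : ClosedSubspace H} (h : le c (compl d)) :
    projSq u (sup c d) = projSq u c + projSq u d := by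
  have hcd : c.1 ⟂ d.1 := Submodule.isOrtho_iff_le.2 h
  rw [projSq_eq, projSq_eq, projSq_eq]
  change ‖(c.1 ⊔ d.1).topologicalClosure.starProjection u‖ ^ 2 = _
  rw [Submodule.starProjection_topologicalClosure_sup_of_isOrtho hcd, sq, sq, sq]
  exact norm_add_sq_eq_norm_sq_add_norm_sq_of_inner_eq_zero _ _
    (hcd.inner_eq (c.1.starProjection_apply_mem u) (d.1.starProjection_apply_mem u))

theorem isState_projSq {u : H} (hu : ‖u‖ = 1) : IsState (projSq u) :=
  ⟨fun c ↦ ⟨sq_nonneg _, by simpa [hu] using projSq_le u c⟩, by simp [projSq_top, hu],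
    fun _ _ ↦ projSq_sup_of_le_compl u⟩

theorem exists_projSq_separating (a b : ClosedSubspace H) (hab : ¬ le a b) :
    ∃ u : H, ‖u‖ = 1 ∧ u ∈ a.1 ∧ u ∉ b.1 ∧
      IsState (projSq u) ∧ projSq u a = 1 ∧ projSq u b < 1 := by
  obtain ⟨u, hu, hua, hub⟩ := Submodule.exists_norm_eq_one_mem_notMem_of_not_le hab
  have hb : projSq u b ≠ 1 := by simpa [hu] using (projSq_eq_norm_sq_iff (c := b)).not.2 hub
  exact ⟨u, hu, hua, hub, isState_projSq hu, by simpa [hu] using projSq_eq_norm_sq_iff.2 hua,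
    lt_of_le_of_ne (by simpa [hu] using projSq_le u b) hb⟩

end ClosedSubspace

open ClosedSubspace in
/-- If `a`, `b` are closed subspaces of a complex Hilbert space `H` with `a` not
contained in `b`, there is a unit vector `u ∈ a \ b` such that
`m(c) = ‖P_c u‖²` is a state on `C(H)` with `m(a) = 1` and `m(b) < 1`.
Consequently `C(H)` admits a strong set of states. -/
theorem stmt_6 {H : Type*} [NormedAddCommGroup H] [InnerProductSpace ℂ H] [CompleteSpace H]
    (a b : ClosedSubspace H) (hab : ¬ le a b) :
    (∃ u : H, ‖u‖ = 1 ∧ u ∈ a.1 ∧ u ∉ b.1 ∧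
      IsState (projSq u) ∧ projSq u a = 1 ∧ projSq u b < 1) ∧
    ∃ S : Set (ClosedSubspace H → ℝ), S.Nonempty ∧ (∀ m ∈ S, IsState m) ∧
      ∀ c d : ClosedSubspace H, ∃ m ∈ S, ((m c = 1 → m d = 1) → le c d) := by
  have hsep := exists_projSq_separating a b hab
  have ⟨u, _, _, _, hu, _⟩ := hsep
  refine ⟨hsep, {m | IsState m}, ⟨projSq u, hu⟩, fun _ hm ↦ hm, fun c d ↦ ?_⟩
  by_cases hcd : le c d
  · exact ⟨projSq u, hu, fun _ ↦ hcd⟩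
  · obtain ⟨w, -, -, -, hw, hwc, hwd⟩ := exists_projSq_separating c d hcd
    exact ⟨projSq w, hw, fun h ↦ absurd (h hwc) hwd.ne⟩
end

section
/- Any ortholattice in which the 3-Go equation holds for all elements is orthomodular: if for all a, b, c one has (a→b) ⊓ (b→c) ⊓ (c→a) = (c→b) ⊓ (b→a) ⊓ (a→c), then for all a, b, a ≤ b implies a ⊔ (a' ⊓ b) = b. -/
/-!
Instantiate the 3-Go equation at `(⊥, a, b)` with `a ≤ b`. Since `⊥ → x = ⊤`, `x → ⊥ = x'` and
`a → b = ⊤`, it collapses to `b' = (b' ⊔ a) ⊓ a'`, whose orthocomplement is the orthomodular law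
`b = a ⊔ (a' ⊓ b)`.
-/

namespace Ortholattice

variable {α : Type*} [Ortholattice α]

theorem le_compl_comm {a b : α} (h : a ≤ bᶜ) : b ≤ aᶜ := by
  simpa only [Ortholattice.compl_compl] using Ortholattice.compl_le_compl _ _ h

end Ortholattice

section Sasaki

variable {α : Type*} [Ortholattice α]

theorem sasaki_bot_left (a : α) : sasaki ⊥ a = ⊤ := by
  rw [sasaki, Ortholattice.compl_bot, top_sup_eq]

theorem sasaki_bot_right (a : α) : sasaki a ⊥ = aᶜ := by
  rw [sasaki, inf_bot_eq, sup_bot_eq]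

theorem sasaki_eq_top_of_le {a b : α} (h : a ≤ b) : sasaki a b = ⊤ := by
  rw [sasaki, inf_eq_left.2 h, sup_comm, Ortholattice.sup_compl_self]

theorem sasaki_eq_of_le {a b : α} (h : a ≤ b) : sasaki b a = bᶜ ⊔ a := by
  rw [sasaki, inf_eq_right.2 h]

end Sasaki

/-- Any ortholattice in which the 3-Go equation holds is orthomodular. -/
theorem stmt_9 {α : Type*} [Ortholattice α]
    (h3Go : ∀ a b c : α,
      sasaki a b ⊓ sasaki b c ⊓ sasaki c a = sasaki c b ⊓ sasaki b a ⊓ sasaki a c) :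
    ∀ a b : α, a ≤ b → a ⊔ (aᶜ ⊓ b) = b := by
  intro a b hab
  have h := h3Go ⊥ a b
  simp only [sasaki_bot_left, sasaki_bot_right, sasaki_eq_top_of_le hab, sasaki_eq_of_le hab,
    top_inf_eq, inf_top_eq] at h
  calc a ⊔ (aᶜ ⊓ b) = ((bᶜ ⊔ a) ⊓ aᶜ)ᶜ := by
        rw [Ortholattice.compl_inf, Ortholattice.compl_sup, Ortholattice.compl_compl,
          Ortholattice.compl_compl, sup_comm, inf_comm]
    _ = b := by rw [← h, Ortholattice.compl_compl]
end

section
/- In every orthomodular lattice admitting a strong set of states, the equation ((a→b) → (c→b)) ⊓ (a→c) ⊓ (b→a) ≤ (c→a) holds for all elements a, b, c. (This equation is derived by substitution from the Mayet–Godowski equation corresponding to the condensed state equation abc+de+fg+hj = gb+ec+ja+hfd.) -/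
/-- A state (probability measure) on an ortholattice. -/
def IsState {α : Type*} [Ortholattice α] (m : α → ℝ) : Prop :=
  (∀ a : α, 0 ≤ m a ∧ m a ≤ 1) ∧ m ⊤ = 1 ∧
    ∀ a b : α, a ≤ bᶜ → m (a ⊔ b) = m a + m b

/-!
Every state `m` satisfies `m (x → y) = 1 - m x + m (x ⊓ y)`, so `m (x → y) = 1` says exactly that
`m (x ⊓ y) = m x`. If `m` gives value `1` to the left-hand side, it gives value `1` to its three
conjuncts, and then `m (a → b) = 1 - m a + m b` while `m (c → b) ≤ 1 - m c + m b`; the first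
conjunct forces `m (a → b) ≤ m (c → b)`, whence `m c ≤ m a = m (a ⊓ c)`, i.e. `m (c → a) = 1`.
A strong set of states turns this implication between values `1` into the inequality.
-/

namespace IsState

variable {α : Type*} [Ortholattice α] {m : α → ℝ}

theorem apply_compl (hm : IsState m) (x : α) : m xᶜ = 1 - m x := by
  have h := hm.2.2 x xᶜ (Ortholattice.compl_compl x).ge
  rw [Ortholattice.sup_compl_self, hm.2.1] at h
  linarith

theorem monotone (hm : IsState m) : Monotone m := by
  intro x y hxy
  have h := hm.2.2 x yᶜ (by rwa [Ortholattice.compl_compl])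
  rw [hm.apply_compl] at h
  linarith [(hm.1 (x ⊔ yᶜ)).2]

theorem apply_eq_one_of_le (hm : IsState m) {x y : α} (hx : m x = 1) (hxy : x ≤ y) :
    m y = 1 :=
  le_antisymm (hm.1 y).2 (hx ▸ hm.monotone hxy)

theorem apply_sasaki (hm : IsState m) (x y : α) :
    m (sasaki x y) = 1 - m x + m (x ⊓ y) := by
  rw [sasaki, hm.2.2 _ _ (Ortholattice.compl_le_compl _ _ inf_le_left), hm.apply_compl]

theorem apply_sasaki_eq_one_iff (hm : IsState m) (x y : α) :
    m (sasaki x y) = 1 ↔ m (x ⊓ y) = m x := by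
  rw [hm.apply_sasaki]
  constructor <;> intro h <;> linarith

theorem apply_sasaki_eq_one (hm : IsState m) {a b c : α}
    (habcb : m (sasaki (sasaki a b) (sasaki c b)) = 1) (hac : m (sasaki a c) = 1)
    (hba : m (sasaki b a) = 1) : m (sasaki c a) = 1 := by
  rw [hm.apply_sasaki_eq_one_iff] at habcb hac hba ⊢
  have hab : m (sasaki a b) = 1 - m a + m b := by rw [hm.apply_sasaki, inf_comm, hba]
  have hcb : m (sasaki c b) ≤ 1 - m c + m b := by
    rw [hm.apply_sasaki]
    linarith [hm.monotone (inf_le_right : c ⊓ b ≤ b)]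
  have habcb_le : m (sasaki a b) ≤ m (sasaki c b) := habcb ▸ hm.monotone inf_le_right
  have hac_le : m (a ⊓ c) ≤ m c := hm.monotone inf_le_right
  rw [inf_comm]
  linarith

end IsState

theorem le_of_forall_apply_eq_one {α : Type*} [Ortholattice α] {S : Set (α → ℝ)}
    (hstrong : ∀ a b : α, ∃ m ∈ S, ((m a = 1 → m b = 1) → a ≤ b)) {x y : α}
    (h : ∀ m ∈ S, m x = 1 → m y = 1) : x ≤ y := by
  obtain ⟨m, hmS, hm⟩ := hstrong x y
  exact hm (h m hmS)

theorem stmt_16_general {α : Type*} [Ortholattice α]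
    (S : Set (α → ℝ)) (hS : ∀ m ∈ S, IsState m)
    (hstrong : ∀ a b : α, ∃ m ∈ S, ((m a = 1 → m b = 1) → a ≤ b))
    (a b c : α) :
    sasaki (sasaki a b) (sasaki c b) ⊓ sasaki a c ⊓ sasaki b a ≤ sasaki c a := by
  refine le_of_forall_apply_eq_one hstrong fun m hmS h ↦ ?_
  have hm := hS m hmS
  exact hm.apply_sasaki_eq_one
    (hm.apply_eq_one_of_le h (inf_le_left.trans inf_le_left))
    (hm.apply_eq_one_of_le h (inf_le_left.trans inf_le_right))
    (hm.apply_eq_one_of_le h inf_le_right)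

/-- In every orthomodular lattice admitting a strong set of states,
`((a→b) → (c→b)) ⊓ (a→c) ⊓ (b→a) ≤ c→a` holds. -/
theorem stmt_16 {α : Type*} [Ortholattice α]
    (hOML : ∀ a b : α, a ≤ b → a ⊔ (aᶜ ⊓ b) = b)
    (S : Set (α → ℝ)) (hne : S.Nonempty) (hS : ∀ m ∈ S, IsState m)
    (hstrong : ∀ a b : α, ∃ m ∈ S, ((m a = 1 → m b = 1) → a ≤ b))
    (a b c : α) :
    sasaki (sasaki a b) (sasaki c b) ⊓ sasaki a c ⊓ sasaki b a ≤ sasaki c a :=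
  stmt_16_general S hS hstrong a b c
end

section
/- Let L be an orthomodular lattice, m a state on L, and let v, u, a₁, a₂, a₃, b₁, b₂, b₃, c₁, c₂, c₃, d₁, d₂, d₃ ∈ L satisfy: v ⊥ aᵢ for i = 1, 2, 3; dᵢ ⊥ cᵢ for i = 1, 2; for each i = 1, 2, 3 the elements aᵢ, bᵢ, cᵢ are mutually orthogonal and aᵢ ⊔ bᵢ ⊔ cᵢ = 1; the elements d₁, d₂, d₃ are mutually orthogonal and d₁ ⊔ d₂ ⊔ d₃ = 1; the elements b₁, b₂, b₃ are mutually orthogonal; and the elements c₃, u, d₃ are mutually orthogonal. Then m(v) = 1 implies m(u') = 1. -/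
/-!
Since `m v = 1` and `v ⊥ aᵢ`, each `m aᵢ` vanishes, so `m bᵢ + m cᵢ = 1`; as `∑ m bᵢ ≤ 1`,
this forces `∑ m cᵢ ≥ 2`. On the other hand `m dᵢ ≤ 1 - m cᵢ` for `i = 1, 2` gives
`m d₃ ≥ m c₁ + m c₂ - 1`, and then `m u ≤ 1 - m c₃ - m d₃ ≤ 2 - ∑ m cᵢ ≤ 0`.
-/

namespace IsState

variable {α : Type*} [Ortholattice α] {m : α → ℝ}

theorem nonneg (hm : IsState m) (a : α) : 0 ≤ m a := (hm.1 a).1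

theorem le_one (hm : IsState m) (a : α) : m a ≤ 1 := (hm.1 a).2

theorem map_top (hm : IsState m) : m ⊤ = 1 := hm.2.1

theorem map_sup (hm : IsState m) {a b : α} (hab : a ≤ bᶜ) : m (a ⊔ b) = m a + m b :=
  hm.2.2 a b hab

theorem add_le_one (hm : IsState m) {a b : α} (hab : a ≤ bᶜ) : m a + m b ≤ 1 :=
  hm.map_sup hab ▸ hm.le_one _

theorem map_sup₃ (hm : IsState m) {a b c : α} (hab : a ≤ bᶜ) (hac : a ≤ cᶜ) (hbc : b ≤ cᶜ) :
    m (a ⊔ b ⊔ c) = m a + m b + m c := by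
  rw [hm.map_sup (sup_le hac hbc), hm.map_sup hab]

theorem add_add_le_one (hm : IsState m) {a b c : α} (hab : a ≤ bᶜ) (hac : a ≤ cᶜ)
    (hbc : b ≤ cᶜ) : m a + m b + m c ≤ 1 :=
  hm.map_sup₃ hab hac hbc ▸ hm.le_one _

theorem add_add_eq_one (hm : IsState m) {a b c : α} (hab : a ≤ bᶜ) (hac : a ≤ cᶜ)
    (hbc : b ≤ cᶜ) (habc : a ⊔ b ⊔ c = ⊤) : m a + m b + m c = 1 := by
  rw [← hm.map_sup₃ hab hac hbc, habc, hm.map_top]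

theorem map_compl (hm : IsState m) (a : α) : m aᶜ = 1 - m a := by
  have h := hm.map_sup (Ortholattice.compl_compl a).ge
  rw [Ortholattice.sup_compl_self, hm.map_top] at h
  linarith

theorem map_eq_zero_of_le_compl (hm : IsState m) {v a : α} (hv : m v = 1) (hva : v ≤ aᶜ) :
    m a = 0 := by
  linarith [hm.add_le_one hva, hm.nonneg a]

end IsState

theorem stmt_17_general {α : Type*} [Ortholattice α]
    (m : α → ℝ) (hm : IsState m)
    (v u a₁ a₂ a₃ b₁ b₂ b₃ c₁ c₂ c₃ d₁ d₂ d₃ : α)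
    -- `v ⊥ aᵢ` for `i = 1, 2, 3`
    (hva₁ : v ≤ a₁ᶜ) (hva₂ : v ≤ a₂ᶜ) (hva₃ : v ≤ a₃ᶜ)
    -- `dᵢ ⊥ cᵢ` for `i = 1, 2`
    (hdc₁ : d₁ ≤ c₁ᶜ) (hdc₂ : d₂ ≤ c₂ᶜ)
    -- `{a₁, b₁, c₁}` mutually orthogonal with join `1`
    (hab₁ : a₁ ≤ b₁ᶜ) (hac₁ : a₁ ≤ c₁ᶜ) (hbc₁ : b₁ ≤ c₁ᶜ)
    (habc₁ : a₁ ⊔ b₁ ⊔ c₁ = ⊤)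
    -- `{a₂, b₂, c₂}` mutually orthogonal with join `1`
    (hab₂ : a₂ ≤ b₂ᶜ) (hac₂ : a₂ ≤ c₂ᶜ) (hbc₂ : b₂ ≤ c₂ᶜ)
    (habc₂ : a₂ ⊔ b₂ ⊔ c₂ = ⊤)
    -- `{a₃, b₃, c₃}` mutually orthogonal with join `1`
    (hab₃ : a₃ ≤ b₃ᶜ) (hac₃ : a₃ ≤ c₃ᶜ) (hbc₃ : b₃ ≤ c₃ᶜ)
    (habc₃ : a₃ ⊔ b₃ ⊔ c₃ = ⊤)
    -- `{d₁, d₂, d₃}` mutually orthogonal with join `1`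
    (hd₁₂ : d₁ ≤ d₂ᶜ) (hd₁₃ : d₁ ≤ d₃ᶜ) (hd₂₃ : d₂ ≤ d₃ᶜ)
    (hddd : d₁ ⊔ d₂ ⊔ d₃ = ⊤)
    -- `{b₁, b₂, b₃}` mutually orthogonal
    (hb₁₂ : b₁ ≤ b₂ᶜ) (hb₁₃ : b₁ ≤ b₃ᶜ) (hb₂₃ : b₂ ≤ b₃ᶜ)
    -- `{c₃, u, d₃}` mutually orthogonal
    (hcu : c₃ ≤ uᶜ) (hcd : c₃ ≤ d₃ᶜ) (hud : u ≤ d₃ᶜ) :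
    m v = 1 → m uᶜ = 1 := by
  intro hv
  have ha₁ := hm.map_eq_zero_of_le_compl hv hva₁
  have ha₂ := hm.map_eq_zero_of_le_compl hv hva₂
  have ha₃ := hm.map_eq_zero_of_le_compl hv hva₃
  have h₁ := hm.add_add_eq_one hab₁ hac₁ hbc₁ habc₁
  have h₂ := hm.add_add_eq_one hab₂ hac₂ hbc₂ habc₂
  have h₃ := hm.add_add_eq_one hab₃ hac₃ hbc₃ habc₃
  have hd := hm.add_add_eq_one hd₁₂ hd₁₃ hd₂₃ hddd
  have hb := hm.add_add_le_one hb₁₂ hb₁₃ hb₂₃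
  have hcud := hm.add_add_le_one hcu hcd hud
  have hu : m u = 0 := by
    linarith [hm.add_le_one hdc₁, hm.add_le_one hdc₂, hm.nonneg u]
  rw [hm.map_compl, hu, sub_zero]

/-- In an orthomodular lattice with elements arranged as in the OML MG1
(with the listed orthogonality and disjunction conditions), any state `m` with
`m(v) = 1` satisfies `m(u') = 1`. -/
theorem stmt_17 {α : Type*} [Ortholattice α]
    (hOML : ∀ a b : α, a ≤ b → a ⊔ (aᶜ ⊓ b) = b)
    (m : α → ℝ) (hm : IsState m)
    (v u a₁ a₂ a₃ b₁ b₂ b₃ c₁ c₂ c₃ d₁ d₂ d₃ : α)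
    -- `v ⊥ aᵢ` for `i = 1, 2, 3`
    (hva₁ : v ≤ a₁ᶜ) (hva₂ : v ≤ a₂ᶜ) (hva₃ : v ≤ a₃ᶜ)
    -- `dᵢ ⊥ cᵢ` for `i = 1, 2`
    (hdc₁ : d₁ ≤ c₁ᶜ) (hdc₂ : d₂ ≤ c₂ᶜ)
    -- `{a₁, b₁, c₁}` mutually orthogonal with join `1`
    (hab₁ : a₁ ≤ b₁ᶜ) (hac₁ : a₁ ≤ c₁ᶜ) (hbc₁ : b₁ ≤ c₁ᶜ)
    (habc₁ : a₁ ⊔ b₁ ⊔ c₁ = ⊤)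
    -- `{a₂, b₂, c₂}` mutually orthogonal with join `1`
    (hab₂ : a₂ ≤ b₂ᶜ) (hac₂ : a₂ ≤ c₂ᶜ) (hbc₂ : b₂ ≤ c₂ᶜ)
    (habc₂ : a₂ ⊔ b₂ ⊔ c₂ = ⊤)
    -- `{a₃, b₃, c₃}` mutually orthogonal with join `1`
    (hab₃ : a₃ ≤ b₃ᶜ) (hac₃ : a₃ ≤ c₃ᶜ) (hbc₃ : b₃ ≤ c₃ᶜ)
    (habc₃ : a₃ ⊔ b₃ ⊔ c₃ = ⊤)
    -- `{d₁, d₂, d₃}` mutually orthogonal with join `1`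
    (hd₁₂ : d₁ ≤ d₂ᶜ) (hd₁₃ : d₁ ≤ d₃ᶜ) (hd₂₃ : d₂ ≤ d₃ᶜ)
    (hddd : d₁ ⊔ d₂ ⊔ d₃ = ⊤)
    -- `{b₁, b₂, b₃}` mutually orthogonal
    (hb₁₂ : b₁ ≤ b₂ᶜ) (hb₁₃ : b₁ ≤ b₃ᶜ) (hb₂₃ : b₂ ≤ b₃ᶜ)
    -- `{c₃, u, d₃}` mutually orthogonal
    (hcu : c₃ ≤ uᶜ) (hcd : c₃ ≤ d₃ᶜ) (hud : u ≤ d₃ᶜ) :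
    m v = 1 → m uᶜ = 1 :=
  stmt_17_general m hm v u a₁ a₂ a₃ b₁ b₂ b₃ c₁ c₂ c₃ d₁ d₂ d₃ hva₁ hva₂ hva₃ hdc₁ hdc₂ hab₁ hac₁
    hbc₁ habc₁ hab₂ hac₂ hbc₂ habc₂ hab₃ hac₃ hbc₃ habc₃ hd₁₂ hd₁₃ hd₂₃ hddd hb₁₂ hb₁₃ hb₂₃ hcu hcd
    hud
end
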